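/- arXiv:math/0702134 — 6 statements merged into one kernel-verified Lean document; each statement's English description precedes it below -/
import Mathlib

section
/- Let F be a nonabelian free group of finite rank (the free group on n ≥ 2 free generators). Then the negligible subsets of F form a proper ideal in the Boolean algebra of subsets of F: the union of two negligible subsets of F is negligible, any subset of a negligible subset of F is negligible, and F itself is not negligible. -/
open FirstOrder

/-- The formal inverse of a word (as a list of letters with exponents ±1). -/
def invWord {α : Type*} (u : List (α × Bool)) : List (α × Bool) :=
  (u.map fun x => (x.1, !x.2)).reverse

/-- `s = (p, u)` is an embedded subword of (the reduced word of) `w`: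
`u` is a nonempty word occurring as the contiguous block of letters of the
reduced word of `w` starting at position `p`. -/
def IsEmbeddedSubword {α : Type*} [DecidableEq α] (w : FreeGroup α)
    (s : ℕ × List (α × Bool)) : Prop :=
  s.2 ≠ [] ∧ (w.toWord.drop s.1).take s.2.length = s.2

/-- A proper embedded subword of `w` is an embedded subword which is not all of `w`. -/
def IsProperEmbeddedSubword {α : Type*} [DecidableEq α] (w : FreeGroup α)
    (s : ℕ × List (α × Bool)) : Prop :=
  IsEmbeddedSubword w s ∧ s.2.length < w.toWord.length

/-- Position `j` (a letter of the reduced word) is covered by the embedded subword `s`. -/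
def CoversPos {α : Type*} (s : ℕ × List (α × Bool)) (j : ℕ) : Prop :=
  s.1 ≤ j ∧ j < s.1 + s.2.length

/-- A subset `X` of a free group is negligible if there is `N : ℕ` such that for every
`ε > 0`, all but finitely many `w ∈ X` admit `N` pairs of proper embedded subwords
`(w_i, w_i')` with `w_i'` equal to `w_i` or to its inverse word, `w_i ≠ w_i'` as embedded
subwords, and such that the positions of `w` not covered by any of them number at most
`ε · length w`. -/
def Negligible {α : Type*} [DecidableEq α] (X : Set (FreeGroup α)) : Prop :=
  ∃ N : ℕ, ∀ ε : ℝ, 0 < ε → ∃ S : Finset (FreeGroup α),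
    ∀ w ∈ X, w ∉ S →
      ∃ sub : Fin N → (ℕ × List (α × Bool)) × (ℕ × List (α × Bool)),
        (∀ i, IsProperEmbeddedSubword w (sub i).1 ∧ IsProperEmbeddedSubword w (sub i).2) ∧
        (∀ i, (sub i).2.2 = (sub i).1.2 ∨ (sub i).2.2 = invWord (sub i).1.2) ∧
        (∀ i, (sub i).1 ≠ (sub i).2) ∧
        (({j : ℕ | j < w.toWord.length ∧
            ∀ i, ¬ CoversPos ((sub i).1) j ∧ ¬ CoversPos ((sub i).2) j}.ncard : ℝ)
          ≤ ε * w.toWord.length)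

/-- The functions of the first-order language of groups:
a constant `1`, a unary function `⁻¹` and a binary function `·`. -/
def groupFunctions : ℕ → Type
  | 0 => Unit
  | 1 => Unit
  | 2 => Unit
  | _ => Empty

/-- The first-order language of groups `(·, ⁻¹, 1)`. -/
def groupLang : Language := ⟨groupFunctions, fun _ => Empty⟩

/-- Any group is a structure for the language of groups in the natural way. -/
instance groupLangStructure (G : Type*) [Group G] : groupLang.Structure G where
  funMap {n} f x :=
    match n, f with
    | 0, _ => 1
    | 1, _ => (x 0)⁻¹
    | 2, _ => x 0 * x 1
    | (_ + 3), f => f.elim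
  RelMap {n} r _ := r.elim

/-- A subset of a group is definable if it is defined, with parameters, by a first-order
formula in the language of groups. -/
def IsDefinable {G : Type*} [Group G] (X : Set G) : Prop :=
  Set.Definable₁ (Set.univ : Set G) groupLang X

/-- A subset `X` of a group is (left) generic if finitely many left translates of `X`
cover the group. -/
def Generic {G : Type*} [Group G] (X : Set G) : Prop :=
  ∃ s : Finset G, ∀ x : G, ∃ g ∈ s, g⁻¹ * x ∈ X


/-!
The union of two negligible sets is negligible because the number `N` of pairs may be raised:
repeating pairs changes nothing, and a witness with no pair at all can only exist for the
trivial word.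

The whole group is not negligible because of the positive words `b a b a² b a³ b ⋯ aᵏ b`.
Two consecutive `b`'s at distance `i + 2` pin down where a subword sits, so a subword of length
at least `2k + 3` occurs only once, and being positive the word contains no inverse of a
subword. Hence `N` pairs cover at most `N (4k + 4)` letters, a vanishing fraction of the
`(k + 1)(k + 2) / 2` letters of the word.
-/

/-- The positions of the letters `b` in `b a b a² b a³ b ⋯`. -/
def sepPos : ℕ → ℕ
  | 0 => 0
  | i + 1 => sepPos i + (i + 2)

lemma sepPos_succ (i : ℕ) : sepPos (i + 1) = sepPos i + (i + 2) := rfl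

lemma sepPos_strictMono : StrictMono sepPos :=
  strictMono_nat_of_lt_succ fun i => by rw [sepPos_succ]; omega

lemma two_mul_sepPos_add_one (k : ℕ) : 2 * (sepPos k + 1) = (k + 1) * (k + 2) := by
  induction k with
  | zero => rfl
  | succ k ih => rw [sepPos_succ]; linarith

lemma exists_sepPos_mem_Icc {k p : ℕ} (hp : p ≤ sepPos k) :
    ∃ i ≤ k, p ≤ sepPos i ∧ sepPos i ≤ p + k := by
  induction k with
  | zero => exact ⟨0, le_rfl, hp, by simp [sepPos]⟩
  | succ k ih =>
    by_cases h : p ≤ sepPos k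
    · obtain ⟨i, hik, hi⟩ := ih h
      exact ⟨i, by omega, hi.1, by omega⟩
    · exact ⟨k + 1, le_rfl, hp, by rw [sepPos_succ] at hp ⊢; omega⟩

/-- Consecutive separators `sepPos i`, `sepPos (i + 1)` are at distance `i + 2`, so a window
containing two of them is located by its pattern of separators. -/
lemma eq_of_forall_mem_range_sepPos_iff {p q m i : ℕ} (hp : p ≤ sepPos i)
    (hm : sepPos (i + 1) < p + m)
    (h : ∀ t < m, (p + t ∈ Set.range sepPos ↔ q + t ∈ Set.range sepPos)) : p = q := by
  have hi := sepPos_succ i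
  obtain ⟨j, hj⟩ := (h (sepPos i - p) (by omega)).1 ⟨i, by omega⟩
  obtain ⟨j', hj'⟩ := (h (sepPos (i + 1) - p) (by omega)).1 ⟨i + 1, by omega⟩
  have hjj' : j < j' := sepPos_strictMono.lt_iff_lt.1 (by omega)
  have hj'_eq : j' = j + 1 := by
    by_contra hne
    have h1 : sepPos j < sepPos (j + 1) := sepPos_strictMono (by omega)
    have h2 : sepPos (j + 1) < sepPos j' := sepPos_strictMono (by omega)
    have ht : sepPos (j + 1) - q < m := by omega
    obtain ⟨r, hr⟩ := (h _ ht).2 ⟨j + 1, by omega⟩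
    have : i < r := sepPos_strictMono.lt_iff_lt.1 (by omega)
    have : r < i + 1 := sepPos_strictMono.lt_iff_lt.1 (by omega)
    omega
  subst hj'_eq
  obtain rfl : j = i := by have := sepPos_succ j; omega
  omega

section Occurrence

variable {β : Type*} {L u : List β} {p : ℕ}

lemma List.add_length_le_of_take_drop_eq (h : (L.drop p).take u.length = u) (hu : u ≠ []) :
    p + u.length ≤ L.length := by
  have hlen := congrArg List.length h
  have := List.length_pos_iff.2 hu
  simp only [List.length_take, List.length_drop] at hlen
  omega

lemma List.getElem_eq_of_take_drop_eq (h : (L.drop p).take u.length = u) {t : ℕ}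
    (ht : t < u.length) :
    L[p + t]'(by
      have := List.add_length_le_of_take_drop_eq h (List.ne_nil_of_length_pos (by omega))
      omega) = u[t] := by
  have h' := List.getElem_of_eq h.symm ht
  simp [h', List.getElem_take, List.getElem_drop]

end Occurrence

variable {α : Type*}

open scoped Classical in
/-- The word `b a b a² b a³ b ⋯ aᵏ b`. -/
noncomputable def sepWord (a b : α) (k : ℕ) : List (α × Bool) :=
  List.ofFn fun j : Fin (sepPos k + 1) => (if (j : ℕ) ∈ Set.range sepPos then b else a, true)

lemma length_sepWord (a b : α) (k : ℕ) : (sepWord a b k).length = sepPos k + 1 := by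
  simp [sepWord]

lemma snd_eq_true_of_mem_sepWord {a b : α} {k : ℕ} {x : α × Bool} (hx : x ∈ sepWord a b k) :
    x.2 = true := by
  obtain ⟨j, rfl⟩ := List.mem_ofFn.1 hx
  rfl

lemma mem_range_sepPos_iff_of_getElem_sepWord_eq {a b : α} (hab : a ≠ b) {k j j' : ℕ}
    (hj : j < (sepWord a b k).length) (hj' : j' < (sepWord a b k).length)
    (h : (sepWord a b k)[j] = (sepWord a b k)[j']) :
    j ∈ Set.range sepPos ↔ j' ∈ Set.range sepPos := by
  simp only [sepWord, List.getElem_ofFn, Prod.mk.injEq, and_true] at h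
  split_ifs at h with h1 h2 h2 <;> simp_all [eq_comm]

lemma eq_of_take_drop_sepWord_eq {a b : α} (hab : a ≠ b) {k p q : ℕ} {u : List (α × Bool)}
    (hp : ((sepWord a b k).drop p).take u.length = u)
    (hq : ((sepWord a b k).drop q).take u.length = u) (hu : 2 * k + 3 ≤ u.length) :
    p = q := by
  have hu' : u ≠ [] := List.ne_nil_of_length_pos (by omega)
  have hpL := List.add_length_le_of_take_drop_eq hp hu'
  have hqL := List.add_length_le_of_take_drop_eq hq hu'
  rw [length_sepWord] at hpL hqL
  obtain ⟨i, hik, hi, hpi⟩ := exists_sepPos_mem_Icc (k := k) (p := p) (by omega)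
  refine eq_of_forall_mem_range_sepPos_iff hi (m := u.length) (by rw [sepPos_succ]; omega)
    fun t ht => mem_range_sepPos_iff_of_getElem_sepWord_eq (k := k) hab
      (by rw [length_sepWord]; omega) (by rw [length_sepWord]; omega) ?_
  rw [List.getElem_eq_of_take_drop_eq hp ht, List.getElem_eq_of_take_drop_eq hq ht]

section CoveringPairs

variable [DecidableEq α]

/-- A pair `(w_i, w_i')` as in the definition of negligibility. -/
def IsMatchedPair (w : FreeGroup α) (P : (ℕ × List (α × Bool)) × (ℕ × List (α × Bool))) :
    Prop :=
  (IsProperEmbeddedSubword w P.1 ∧ IsProperEmbeddedSubword w P.2) ∧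
    (P.2.2 = P.1.2 ∨ P.2.2 = invWord P.1.2) ∧ P.1 ≠ P.2

def uncovered (w : FreeGroup α) {N : ℕ}
    (sub : Fin N → (ℕ × List (α × Bool)) × (ℕ × List (α × Bool))) : Set ℕ :=
  {j | j < w.toWord.length ∧ ∀ i, ¬ CoversPos (sub i).1 j ∧ ¬ CoversPos (sub i).2 j}

def HasCoveringPairs (w : FreeGroup α) (N : ℕ) (ε : ℝ) : Prop :=
  ∃ sub : Fin N → (ℕ × List (α × Bool)) × (ℕ × List (α × Bool)),
    (∀ i, IsMatchedPair w (sub i)) ∧ ((uncovered w sub).ncard : ℝ) ≤ ε * w.toWord.length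

lemma negligible_iff {X : Set (FreeGroup α)} :
    Negligible X ↔ ∃ N : ℕ, ∀ ε : ℝ, 0 < ε → ∃ S : Finset (FreeGroup α),
      ∀ w ∈ X, w ∉ S → HasCoveringPairs w N ε := by
  simp only [Negligible, HasCoveringPairs, IsMatchedPair, uncovered, forall_and, and_assoc]

namespace HasCoveringPairs

variable {w : FreeGroup α} {N M : ℕ} {ε ε' : ℝ}

lemma mono_eps (h : HasCoveringPairs w N ε) (hεε' : ε ≤ ε') : HasCoveringPairs w N ε' :=
  let ⟨sub, hsub, hU⟩ := h
  ⟨sub, hsub, hU.trans (by gcongr)⟩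

lemma mono_of_pos (h : HasCoveringPairs w N ε) (hN : 0 < N) (hNM : N ≤ M) :
    HasCoveringPairs w M ε := by
  obtain ⟨sub, hsub, hU⟩ := h
  let f : Fin M → Fin N := fun i => ⟨min i (N - 1), by omega⟩
  have hf : Function.Surjective f := fun i =>
    ⟨⟨i, i.2.trans_le hNM⟩, Fin.ext (by simp only [f]; omega)⟩
  have hUf : uncovered w (sub ∘ f) = uncovered w sub := by
    ext j
    simp only [uncovered, Set.mem_ofPred_eq, Function.comp_apply,
      hf.forall (p := fun i => ¬ CoversPos (sub i).1 j ∧ ¬ CoversPos (sub i).2 j)]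
  exact ⟨sub ∘ f, fun i => hsub (f i), hUf ▸ hU⟩

lemma eq_one_of_zero (h : HasCoveringPairs w 0 ε) (hε : ε < 1) : w = 1 := by
  obtain ⟨sub, -, hU⟩ := h
  have hUw : uncovered w sub = ↑(Finset.range w.toWord.length) := by
    ext j
    simp [uncovered]
  rw [hUw, Set.ncard_coe_finset, Finset.card_range] at hU
  have hL : w.toWord.length = 0 := by
    by_contra hL
    have : (0 : ℝ) < w.toWord.length := by positivity
    nlinarith
  simpa using hL

lemma mono (h : HasCoveringPairs w N ε) (hw : w ≠ 1) (hε : ε < 1) (hNM : N ≤ M)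
    (hεε' : ε ≤ ε') : HasCoveringPairs w M ε' := by
  rcases Nat.eq_zero_or_pos N with rfl | hN
  · exact absurd (h.eq_one_of_zero hε) hw
  · exact (h.mono_of_pos hN hNM).mono_eps hεε'

end HasCoveringPairs

lemma length_le_ncard_uncovered_add {w : FreeGroup α} {N m : ℕ}
    {sub : Fin N → (ℕ × List (α × Bool)) × (ℕ × List (α × Bool))}
    (hm : ∀ i, (sub i).1.2.length ≤ m ∧ (sub i).2.2.length ≤ m) :
    w.toWord.length ≤ (uncovered w sub).ncard + N * (2 * m) := by
  let span : ℕ × List (α × Bool) → Finset ℕ := fun s => Finset.Ico s.1 (s.1 + s.2.length)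
  let C := Finset.univ.biUnion fun i => span (sub i).1 ∪ span (sub i).2
  have hC : C.card ≤ N * (2 * m) := by
    refine Finset.card_biUnion_le.trans ?_
    refine (Finset.sum_le_card_nsmul _ _ (2 * m) fun i _ => ?_).trans (by simp)
    refine (Finset.card_union_le _ _).trans ?_
    simp only [span, Nat.card_Ico]
    have := hm i
    omega
  have hU : uncovered w sub = ↑(Finset.range w.toWord.length \ C) := by
    ext j
    simp [uncovered, C, span, CoversPos]
  rw [hU, Set.ncard_coe_finset]
  calc w.toWord.length = (Finset.range w.toWord.length).card := (Finset.card_range _).symm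
    _ ≤ (Finset.range w.toWord.length \ C).card + C.card := Finset.card_le_card_sdiff_add_card
    _ ≤ _ := by gcongr

end CoveringPairs

section SepWord

variable [DecidableEq α] {a b : α} {k : ℕ}

lemma IsEmbeddedSubword.mem_toWord {w : FreeGroup α} {s : ℕ × List (α × Bool)}
    (h : IsEmbeddedSubword w s) {x : α × Bool} (hx : x ∈ s.2) : x ∈ w.toWord := by
  rw [← h.2] at hx
  exact List.mem_of_mem_drop (List.mem_of_mem_take hx)

lemma toWord_mk_sepWord (a b : α) (k : ℕ) :
    (FreeGroup.mk (sepWord a b k)).toWord = sepWord a b k := by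
  rw [FreeGroup.toWord_mk, FreeGroup.IsReduced.reduce_eq]
  exact (List.pairwise_of_forall_mem_list fun x hx y hy _ => by
    rw [snd_eq_true_of_mem_sepWord hx, snd_eq_true_of_mem_sepWord hy]).isChain

/-- In the positive word `sepWord a b k` no subword has its inverse as a subword, so a matched
pair consists of two occurrences of one subword, which is then short. -/
lemma IsMatchedPair.length_le_of_sepWord (hab : a ≠ b)
    {P : (ℕ × List (α × Bool)) × (ℕ × List (α × Bool))}
    (hP : IsMatchedPair (FreeGroup.mk (sepWord a b k)) P) :
    P.1.2.length ≤ 2 * k + 2 ∧ P.2.2.length ≤ 2 * k + 2 := by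
  obtain ⟨⟨⟨h1, -⟩, ⟨h2, -⟩⟩, heq | hinv, hne⟩ := hP
  · have hlen : P.1.2.length ≤ 2 * k + 2 := by
      by_contra! hlong
      have hp := h1.2
      have hq := h2.2
      rw [toWord_mk_sepWord] at hp hq
      rw [heq] at hq
      exact hne (Prod.ext (eq_of_take_drop_sepWord_eq hab hp hq (by omega)) heq.symm)
    exact ⟨hlen, heq ▸ hlen⟩
  · obtain ⟨x, hx⟩ := List.exists_mem_of_ne_nil _ h1.1
    have hx' : (x.1, !x.2) ∈ P.2.2 := by
      rw [hinv, invWord]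
      exact List.mem_reverse.2 (List.mem_map.2 ⟨x, hx, rfl⟩)
    have hpos := snd_eq_true_of_mem_sepWord (toWord_mk_sepWord a b k ▸ h1.mem_toWord hx)
    have hneg := snd_eq_true_of_mem_sepWord (toWord_mk_sepWord a b k ▸ h2.mem_toWord hx')
    simp [hpos] at hneg

lemma not_hasCoveringPairs_sepWord (hab : a ≠ b) {N : ℕ} (hk : 16 * N ≤ k) :
    ¬ HasCoveringPairs (FreeGroup.mk (sepWord a b k)) N (1 / 2) := by
  rintro ⟨sub, hsub, hU⟩
  set U := (uncovered (FreeGroup.mk (sepWord a b k)) sub).ncard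
  have hL := length_le_ncard_uncovered_add (w := FreeGroup.mk (sepWord a b k)) fun i =>
    (hsub i).length_le_of_sepWord hab
  rw [toWord_mk_sepWord, length_sepWord] at hL hU
  have hU' : 2 * U ≤ sepPos k + 1 := by
    have : ((2 * U : ℕ) : ℝ) ≤ (sepPos k + 1 : ℕ) := by push_cast at hU ⊢; linarith
    exact_mod_cast this
  have h2 := two_mul_sepPos_add_one k
  nlinarith

theorem not_negligible_univ [Nontrivial α] : ¬ Negligible (Set.univ : Set (FreeGroup α)) := by
  obtain ⟨a, b, hab⟩ := exists_pair_ne α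
  rw [negligible_iff]
  rintro ⟨N, hN⟩
  obtain ⟨S, hS⟩ := hN (1 / 2) (by norm_num)
  have hinj : Function.Injective fun k => FreeGroup.mk (sepWord a b k) := fun k l hkl =>
    sepPos_strictMono.injective <| by
      simpa only [toWord_mk_sepWord, length_sepWord, add_left_inj] using
        congrArg (·.toWord.length) hkl
  have hev := hinj.tendsto_cofinite.eventually S.eventually_cofinite_notMem
  rw [Nat.cofinite_eq_atTop] at hev
  obtain ⟨k, hkS, hk⟩ := (hev.and (Filter.eventually_ge_atTop (16 * N))).exists
  exact not_hasCoveringPairs_sepWord hab hk (hS _ (Set.mem_univ _) hkS)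

end SepWord

namespace Negligible

variable [DecidableEq α] {X Y : Set (FreeGroup α)}

theorem mono (hX : Negligible X) (hYX : Y ⊆ X) : Negligible Y :=
  let ⟨N, hN⟩ := hX
  ⟨N, fun ε hε => (hN ε hε).imp fun _ hS w hw => hS w (hYX hw)⟩

theorem union (hX : Negligible X) (hY : Negligible Y) : Negligible (X ∪ Y) := by
  rw [negligible_iff] at hX hY ⊢
  obtain ⟨N₁, hX⟩ := hX
  obtain ⟨N₂, hY⟩ := hY
  refine ⟨max N₁ N₂, fun ε hε => ?_⟩
  -- shrinking `ε` below `1` lets a witness with no pairs only exist for `w = 1`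
  have hδ : 0 < min ε (1 / 2) := by positivity
  obtain ⟨S₁, hS₁⟩ := hX _ hδ
  obtain ⟨S₂, hS₂⟩ := hY _ hδ
  refine ⟨insert 1 (S₁ ∪ S₂), fun w hw hwS => ?_⟩
  simp only [Finset.mem_insert, Finset.mem_union, not_or] at hwS
  obtain ⟨hw1, hwS₁, hwS₂⟩ := hwS
  have hδ1 : min ε (1 / 2) < 1 := (min_le_right _ _).trans_lt (by norm_num)
  rcases hw with hw | hw
  · exact (hS₁ w hw hwS₁).mono hw1 hδ1 (le_max_left _ _) (min_le_left _ _)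
  · exact (hS₂ w hw hwS₂).mono hw1 hδ1 (le_max_right _ _) (min_le_left _ _)

end Negligible

/-- The negligible subsets of a nonabelian free group of finite rank form a proper ideal
in the Boolean algebra of subsets: unions of negligible sets are negligible, subsets of
negligible sets are negligible, and the whole group is not negligible. -/
theorem negligible_ideal (n : ℕ) (hn : 2 ≤ n) :
    (∀ X Y : Set (FreeGroup (Fin n)), Negligible X → Negligible Y → Negligible (X ∪ Y)) ∧
    (∀ X Y : Set (FreeGroup (Fin n)), Y ⊆ X → Negligible X → Negligible Y) ∧
    ¬ Negligible (Set.univ : Set (FreeGroup (Fin n))) := by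
  have : Nontrivial (Fin n) := Fin.nontrivial_iff_two_le.mpr hn
  exact ⟨fun _ _ hX hY => hX.union hY, fun _ _ hYX hX => hX.mono hYX, not_negligible_univ⟩
end

section
/- Let F be a nonabelian free group of finite rank. Then every cyclic subgroup of F (the subgroup generated by a single element of F) is a negligible subset of F. -/
open FirstOrder

/-!
For `a ≠ 1`, write the reduced word of `a` as `c b c⁻¹` with `b` cyclically reduced and
nonempty. For `k ≥ 1` the reduced word of `a ^ k` is then `c bᵏ c⁻¹`, without cancellation.
Splitting `bᵏ = u u r` with `u = b ^ (k / 2)` and `r ∈ {1, b}`, the two adjacent copies of `u`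
form a single pair covering all letters but at most `2|c| + |b|`, a vanishing proportion of the
length `2|c| + k|b|`. Negative powers of `a` are positive powers of `a⁻¹`.
-/

open Filter

theorem Subgroup.exists_pow_of_mem_zpowers {G : Type*} [Group G] {a w : G}
    (hw : w ∈ Subgroup.zpowers a) :
    ∃ k : ℕ, w = a ^ k ∨ w = a⁻¹ ^ k := by
  obtain ⟨m, rfl⟩ := Subgroup.mem_zpowers_iff.mp hw
  obtain ⟨k, rfl | rfl⟩ := Int.eq_nat_or_neg m
  · exact ⟨k, .inl (zpow_natCast a k)⟩
  · exact ⟨k, .inr (by rw [zpow_neg, zpow_natCast, inv_pow])⟩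

namespace FreeGroup

variable {α : Type*} [DecidableEq α]

theorem exists_toWord_pow_eq (x : FreeGroup α) (hx : x ≠ 1) :
    ∃ c b : List (α × Bool), b ≠ [] ∧
      ∀ k ≠ 0, (x ^ k).toWord = c ++ (List.replicate k b).flatten ++ invRev c := by
  refine ⟨reduceCyclically.conjugator x.toWord, reduceCyclically x.toWord, fun hb => hx ?_,
    fun k hk => by rw [toWord_pow, reduceCyclically.reduce_flatten_replicate isReduced_toWord,
      if_neg hk]⟩
  have hconj := reduceCyclically.conj_conjugator_reduceCyclically x.toWord
  rw [hb, List.append_nil] at hconj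
  rw [← mk_toWord (x := x), ← hconj, ← mul_mk, ← inv_mk, mul_inv_cancel]

end FreeGroup

section

variable {α : Type*} [DecidableEq α]

/-- The condition that `Negligible` imposes on a single `w`, with `ε * length w` replaced
by `δ`. -/
def IsAlmostCoveredByPairs (w : FreeGroup α) (N : ℕ) (δ : ℝ) : Prop :=
  ∃ sub : Fin N → (ℕ × List (α × Bool)) × (ℕ × List (α × Bool)),
    (∀ i, IsProperEmbeddedSubword w (sub i).1 ∧ IsProperEmbeddedSubword w (sub i).2) ∧
    (∀ i, (sub i).2.2 = (sub i).1.2 ∨ (sub i).2.2 = invWord (sub i).1.2) ∧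
    (∀ i, (sub i).1 ≠ (sub i).2) ∧
    (({j : ℕ | j < w.toWord.length ∧
        ∀ i, ¬ CoversPos ((sub i).1) j ∧ ¬ CoversPos ((sub i).2) j}.ncard : ℝ) ≤ δ)

theorem IsAlmostCoveredByPairs.mono {w : FreeGroup α} {N : ℕ} {δ δ' : ℝ}
    (h : IsAlmostCoveredByPairs w N δ) (hδ : δ ≤ δ') : IsAlmostCoveredByPairs w N δ' := by
  obtain ⟨sub, hsub, heq, hne, hcard⟩ := h
  exact ⟨sub, hsub, heq, hne, hcard.trans hδ⟩

theorem isAlmostCoveredByPairs_of_toWord_eq_square {w : FreeGroup α}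
    {p u s : List (α × Bool)} (hu : u ≠ []) (hw : w.toWord = p ++ u ++ u ++ s) :
    IsAlmostCoveredByPairs w 1 (p.length + s.length) := by
  have hlen : w.toWord.length = p.length + u.length + u.length + s.length := by
    simp only [hw, List.length_append]
  have hu0 : 0 < u.length := List.length_pos_iff.mpr hu
  have hproper : u.length < w.toWord.length := by omega
  refine ⟨fun _ => ((p.length, u), (p.length + u.length, u)), fun _ => ⟨⟨⟨hu, ?_⟩, hproper⟩,
    ⟨⟨hu, ?_⟩, hproper⟩⟩, fun _ => .inl rfl, fun _ => by simp [hu0.ne'], ?_⟩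
  · simp [hw]
  · rw [hw, List.append_assoc p, ← List.length_append]; simp
  have hsub : {j : ℕ | j < w.toWord.length ∧ ∀ i : Fin 1,
        ¬ CoversPos (p.length, u) j ∧ ¬ CoversPos (p.length + u.length, u) j}
      ⊆ ↑(Finset.range p.length ∪
          Finset.Ico (p.length + u.length + u.length) w.toWord.length) := by
    rintro j ⟨hj, hcov⟩
    simp only [CoversPos, not_and, not_lt] at hcov
    have := hcov 0
    simp only [Finset.coe_union, Finset.coe_range, Finset.coe_Ico, Set.mem_union, Set.mem_Iio,
      Set.mem_Ico]
    omega
  calc _ ≤ ((Finset.range p.length ∪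
          Finset.Ico (p.length + u.length + u.length) w.toWord.length).card : ℝ) := by
        exact_mod_cast (Set.ncard_le_ncard hsub (Finset.finite_toSet _)).trans_eq
          (Set.ncard_coe_finset _)
    _ ≤ ((p.length + s.length : ℕ) : ℝ) := by
        gcongr
        refine (Finset.card_union_le _ _).trans ?_
        simp only [Finset.card_range, Nat.card_Ico]
        omega
    _ = _ := by push_cast; rfl

theorem eventually_isAlmostCoveredByPairs_pow (x : FreeGroup α) {ε : ℝ} (hε : 0 < ε) :
    ∀ᶠ k : ℕ in atTop, x ^ k ≠ 1 →
      IsAlmostCoveredByPairs (x ^ k) 1 (ε * (x ^ k).toWord.length) := by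
  rcases eq_or_ne x 1 with rfl | hx
  · simp
  obtain ⟨c, b, hb, hpow⟩ := FreeGroup.exists_toWord_pow_eq x hx
  filter_upwards [eventually_ge_atTop 2, tendsto_natCast_atTop_atTop.eventually_ge_atTop
    ((2 * c.length + b.length : ℝ) / ε)] with k hk2 hkε _
  set u := (List.replicate (k / 2) b).flatten
  have hword : (x ^ k).toWord
      = c ++ u ++ u ++ ((List.replicate (k % 2) b).flatten ++ FreeGroup.invRev c) := by
    rw [hpow k (by omega)]
    conv_lhs => rw [← Nat.div_add_mod k 2, two_mul, List.replicate_add, List.replicate_add]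
    simp only [u, List.flatten_append, List.append_assoc]
  have hu : u ≠ [] := by simp [u, hb]; omega
  have hb1 : 1 ≤ b.length := List.length_pos_iff.mpr hb
  have hmod : k % 2 * b.length ≤ b.length :=
    mul_le_of_le_one_left (Nat.zero_le _) (Nat.le_of_lt_succ (Nat.mod_lt k two_pos))
  have hlen : k ≤ (x ^ k).toWord.length := by
    rw [hpow k (by omega)]
    simp only [List.length_append, List.length_flatten, List.map_replicate, List.sum_replicate,
      smul_eq_mul, FreeGroup.invRev_length]
    nlinarith
  have hrest : c.length + ((List.replicate (k % 2) b).flatten ++ FreeGroup.invRev c).length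
      ≤ 2 * c.length + b.length := by
    simp only [List.length_append, List.length_flatten, List.map_replicate, List.sum_replicate,
      smul_eq_mul, FreeGroup.invRev_length]
    omega
  refine (isAlmostCoveredByPairs_of_toWord_eq_square hu hword).mono ?_
  calc _ ≤ (2 * c.length + b.length : ℝ) := by exact_mod_cast hrest
    _ ≤ ε * k := (div_le_iff₀' hε).mp hkε
    _ ≤ ε * (x ^ k).toWord.length := by gcongr

end

theorem negligible_cyclic_general (n : ℕ) (a : FreeGroup (Fin n)) :
    Negligible (Subgroup.zpowers a : Set (FreeGroup (Fin n))) := by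
  refine ⟨1, fun ε hε => ?_⟩
  obtain ⟨K, hK⟩ := eventually_atTop.mp ((eventually_isAlmostCoveredByPairs_pow a hε).and
    (eventually_isAlmostCoveredByPairs_pow a⁻¹ hε))
  refine ⟨insert 1 ((Finset.range K).image (a ^ ·) ∪ (Finset.range K).image (a⁻¹ ^ ·)),
    fun w hw hwS => ?_⟩
  have hw1 : w ≠ 1 := fun h => hwS (h ▸ Finset.mem_insert_self _ _)
  obtain ⟨k, rfl | rfl⟩ := Subgroup.exists_pow_of_mem_zpowers hw
  · have hk : K ≤ k := not_lt.mp fun hk => hwS <| Finset.mem_insert_of_mem <|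
      Finset.mem_union_left _ (Finset.mem_image_of_mem _ (Finset.mem_range.mpr hk))
    exact (hK k hk).1 hw1
  · have hk : K ≤ k := not_lt.mp fun hk => hwS <| Finset.mem_insert_of_mem <|
      Finset.mem_union_right _ (Finset.mem_image_of_mem _ (Finset.mem_range.mpr hk))
    exact (hK k hk).2 hw1

/-- Every cyclic subgroup of a nonabelian free group of finite rank is negligible. -/
theorem negligible_cyclic (n : ℕ) (hn : 2 ≤ n) (a : FreeGroup (Fin n)) :
    Negligible (Subgroup.zpowers a : Set (FreeGroup (Fin n))) :=
  negligible_cyclic_general n a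
end

section
/- Let F_ω be the free group on a countably infinite sequence of free generators e_1, e_2, e_3, …, and let X be a definable subset of F_ω which is generic. Then e_n ∈ X for all but finitely many n. -/
open FirstOrder

/-!
A set defined with parameters from a finite set `A` is invariant under every automorphism fixing
`A` pointwise. Choose `n` so large that `e_n` occurs neither in the parameters nor in the finitely
many translating elements `g`. Some `g` has `g⁻¹ e_n ∈ X`, and since `g` does not involve `e_n`,
the transvection `e_n ↦ g⁻¹ e_n` (fixing the other generators) is an automorphism fixing `A`;
it maps `e_n` into `X`, so `e_n ∈ X`.
-/

open Filter FreeGroup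

def MulEquiv.toGroupLangEquiv {G H : Type*} [Group G] [Group H] (σ : G ≃* H) :
    groupLang.Equiv G H where
  toEquiv := σ.toEquiv
  map_fun' {n} f _ :=
    match n, f with
    | 0, _ => map_one σ
    | 1, _ => map_inv σ _
    | 2, _ => map_mul σ _ _
  map_rel' r _ := r.elim

theorem Set.Definable.equiv_comp_mem_iff {L : Language} {M α : Type*} [L.Structure M]
    {A : Set M} {s : Set (α → M)} (hs : A.Definable L s) (φ : L.Equiv M M)
    (hφ : ∀ a ∈ A, φ a = a) (x : α → M) : φ ∘ x ∈ s ↔ x ∈ s := by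
  obtain ⟨ψ, rfl⟩ := Set.definable_iff_exists_formula_sum.mp hs
  have hparams : Sum.elim (↑) (φ ∘ x) = φ ∘ Sum.elim ((↑) : A → M) x := by
    ext (a | i)
    · exact (hφ a a.2).symm
    · rfl
  simp only [Set.mem_ofPred_eq, hparams, Language.StrongHomClass.realize_formula]

theorem IsDefinable.exists_finset_forall_mulEquiv_mem_iff {G : Type*} [Group G] {X : Set G}
    (hX : IsDefinable X) :
    ∃ A : Finset G, ∀ σ : G ≃* G, (∀ b ∈ A, σ b = b) → ∀ a, σ a ∈ X ↔ a ∈ X := by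
  obtain ⟨A, -, hA⟩ := Set.definable_iff_finitely_definable.mp hX
  exact ⟨A, fun σ hσ a => hA.equiv_comp_mem_iff σ.toGroupLangEquiv hσ fun _ => a⟩

namespace FreeGroup

theorem eventually_mem_closure_of_compl_singleton (x : FreeGroup ℕ) :
    ∀ᶠ n in atTop, x ∈ Subgroup.closure (of '' {n}ᶜ) := by
  induction x using FreeGroup.induction_on with
  | C1 => exact .of_forall fun _ => one_mem _
  | of j =>
    filter_upwards [eventually_gt_atTop j] with n hn
    exact Subgroup.subset_closure ⟨j, hn.ne, rfl⟩
  | inv_of j ih => exact ih.mono fun _ => inv_mem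
  | mul x y hx hy => exact (hx.and hy).mono fun _ h => mul_mem h.1 h.2

variable {α : Type*} [DecidableEq α] {n : α} {g h : FreeGroup α}

def transvectionHom (n : α) (g : FreeGroup α) : FreeGroup α →* FreeGroup α :=
  lift (Function.update of n (g * of n))

theorem transvectionHom_of_self : transvectionHom n g (of n) = g * of n := by
  simp [transvectionHom]

theorem transvectionHom_of_of_ne {j : α} (hj : j ≠ n) : transvectionHom n g (of j) = of j := by
  simp [transvectionHom, hj]

theorem transvectionHom_apply_of_mem_closure (hh : h ∈ Subgroup.closure (of '' {n}ᶜ)) :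
    transvectionHom n g h = h := by
  refine MonoidHom.eqOn_closure (f := transvectionHom n g) (g := MonoidHom.id _) ?_ hh
  rintro _ ⟨j, hj, rfl⟩
  exact transvectionHom_of_of_ne hj

theorem transvectionHom_comp_transvectionHom_inv (hg : g ∈ Subgroup.closure (of '' {n}ᶜ)) :
    (transvectionHom n g).comp (transvectionHom n g⁻¹) = MonoidHom.id _ := by
  refine ext_hom _ _ fun j => ?_
  by_cases hj : j = n
  · subst hj
    simp [transvectionHom_of_self, transvectionHom_apply_of_mem_closure hg]
  · simp [transvectionHom_of_of_ne hj]

def transvection (n : α) (g : FreeGroup α) (hg : g ∈ Subgroup.closure (of '' {n}ᶜ)) :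
    FreeGroup α ≃* FreeGroup α :=
  (transvectionHom n g).toMulEquiv (transvectionHom n g⁻¹)
    (by simpa using transvectionHom_comp_transvectionHom_inv (inv_mem hg))
    (transvectionHom_comp_transvectionHom_inv hg)

theorem transvection_apply (hg : g ∈ Subgroup.closure (of '' {n}ᶜ)) (x : FreeGroup α) :
    transvection n g hg x = transvectionHom n g x :=
  rfl

end FreeGroup

/-- If `X` is a generic definable subset of the free group on countably many generators
`e_1, e_2, …`, then `e_n ∈ X` for all but finitely many `n`. -/
theorem generic_contains_cofinitely_many_generators (X : Set (FreeGroup ℕ))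
    (hdef : IsDefinable X) (hgen : Generic X) :
    {n : ℕ | FreeGroup.of n ∉ X}.Finite := by
  obtain ⟨s, hs⟩ := hgen
  obtain ⟨A, hA⟩ := hdef.exists_finset_forall_mulEquiv_mem_iff
  have havoid : ∀ᶠ n in atTop, ∀ x ∈ A ∪ s, x ∈ Subgroup.closure (of '' {n}ᶜ) :=
    (eventually_all_finset _).2 fun x _ => eventually_mem_closure_of_compl_singleton x
  rw [← eventually_cofinite, Nat.cofinite_eq_atTop]
  filter_upwards [havoid] with n hn
  obtain ⟨g, hgs, hgX⟩ := hs (of n)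
  let σ := transvection n g⁻¹ (inv_mem (hn g (Finset.mem_union_right _ hgs)))
  have hσA : ∀ b ∈ A, σ b = b := fun b hb =>
    transvectionHom_apply_of_mem_closure (hn b (Finset.mem_union_left _ hb))
  rwa [← hA σ hσA, transvection_apply, transvectionHom_of_self]
end

section
/- Let F be a nonabelian free group of finite rank and let m ≥ 2 be an integer. Then the set {g^m : g ∈ F} of m-th powers in F is a negligible subset of F. -/
open FirstOrder

/-!
If `g ≠ 1` has reduced word `u c u⁻¹` with `c` cyclically reduced and nonempty, then the reduced
word of `g ^ (k + 2)` is `u c^(k+2) u⁻¹`. It is covered without remainder by two pairs of proper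
embedded subwords: the two overlapping copies of `c^(k+1)` starting at `|u|` and at `|u| + |c|`,
and the pair `u`, `u⁻¹` at the two ends. So one may take `N = 2` and discard only `1`.
-/

namespace FreeGroup

variable {α : Type*} [DecidableEq α]

/-- The conditions on a pair `(w_i, w_i')` in the definition of `Negligible`. -/
def IsRepeatPair (w : FreeGroup α) (p : (ℕ × List (α × Bool)) × (ℕ × List (α × Bool))) :
    Prop :=
  (IsProperEmbeddedSubword w p.1 ∧ IsProperEmbeddedSubword w p.2) ∧
    (p.2.2 = p.1.2 ∨ p.2.2 = invWord p.1.2) ∧ p.1 ≠ p.2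

theorem negligible_of_forall_covered {X : Set (FreeGroup α)} (N : ℕ) (S : Finset (FreeGroup α))
    (h : ∀ w ∈ X, w ∉ S → ∃ sub : Fin N → (ℕ × List (α × Bool)) × (ℕ × List (α × Bool)),
      (∀ i, IsRepeatPair w (sub i)) ∧
        ∀ j < w.toWord.length, ∃ i, CoversPos (sub i).1 j ∨ CoversPos (sub i).2 j) :
    Negligible X := by
  refine ⟨N, fun ε hε => ⟨S, fun w hwX hwS => ?_⟩⟩
  obtain ⟨sub, hsub, hcov⟩ := h w hwX hwS
  refine ⟨sub, fun i => (hsub i).1, fun i => (hsub i).2.1, fun i => (hsub i).2.2, ?_⟩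
  have huncovered : {j : ℕ | j < w.toWord.length ∧
      ∀ i, ¬ CoversPos (sub i).1 j ∧ ¬ CoversPos (sub i).2 j} = ∅ := by
    refine Set.eq_empty_of_forall_notMem fun j ⟨hj, hnot⟩ => ?_
    obtain ⟨i, hi⟩ := hcov j hj
    exact hi.elim (hnot i).1 (hnot i).2
  rw [huncovered, Set.ncard_empty, Nat.cast_zero]
  positivity

section Subwords

variable {w : FreeGroup α} {u : List (α × Bool)}

theorem isProperEmbeddedSubword_of_toWord_eq {p s q : List (α × Bool)}
    (h : w.toWord = p ++ s ++ q) (hs : s ≠ []) (hpq : p ++ q ≠ []) :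
    IsProperEmbeddedSubword w (p.length, s) := by
  refine ⟨⟨hs, by rw [h, List.append_assoc, List.drop_left, List.take_left]⟩, ?_⟩
  have : 0 < (p ++ q).length := List.length_pos_iff.2 hpq
  simp only [h, List.length_append] at this ⊢
  omega

theorem isRepeatPair_of_toWord_eq_append_comm {v c B : List (α × Bool)}
    (hw : w.toWord = u ++ (c ++ B) ++ v) (hcomm : c ++ B = B ++ c) (hc : c ≠ []) (hB : B ≠ []) :
    IsRepeatPair w ((u.length, B), (u.length + c.length, B)) := by
  have hleft : w.toWord = u ++ B ++ (c ++ v) := by simp [hw, hcomm]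
  have hright : w.toWord = (u ++ c) ++ B ++ v := by simp [hw]
  refine ⟨⟨isProperEmbeddedSubword_of_toWord_eq hleft hB (by simp [hc]), ?_⟩, Or.inl rfl, ?_⟩
  · simpa using isProperEmbeddedSubword_of_toWord_eq hright hB (by simp [hc])
  · simpa [Prod.ext_iff] using hc

theorem isRepeatPair_of_toWord_eq_append_invRev {v : List (α × Bool)}
    (hw : w.toWord = u ++ v ++ invRev u) (hu : u ≠ []) (hv : v ≠ []) :
    IsRepeatPair w ((0, u), (u.length + v.length, invRev u)) := by
  have hinv : invRev u ≠ [] := by simpa [invRev] using hu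
  refine ⟨⟨?_, ?_⟩, Or.inr rfl, ne_of_apply_ne Prod.fst
    (Nat.add_pos_left (List.length_pos_iff.2 hu) _).ne⟩
  · exact isProperEmbeddedSubword_of_toWord_eq (p := []) (by simpa using hw) hu (by simp [hv])
  · simpa using isProperEmbeddedSubword_of_toWord_eq (p := u ++ v) (q := [])
      (by rw [List.append_nil]; exact hw) hinv (by simp [hu])

theorem exists_repeatPairs_covering_of_toWord_eq {c : List (α × Bool)} {k : ℕ}
    (hw : w.toWord = u ++ (List.replicate (k + 2) c).flatten ++ invRev u) (hc : c ≠ []) :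
    ∃ sub : Fin 2 → (ℕ × List (α × Bool)) × (ℕ × List (α × Bool)),
      (∀ i, IsRepeatPair w (sub i)) ∧
        ∀ j < w.toWord.length, ∃ i, CoversPos (sub i).1 j ∨ CoversPos (sub i).2 j := by
  set B := (List.replicate (k + 1) c).flatten
  have hcB : (List.replicate (k + 2) c).flatten = c ++ B := by
    rw [List.replicate_succ, List.flatten_cons]
  have hBc : (List.replicate (k + 2) c).flatten = B ++ c := by
    rw [List.replicate_succ', List.flatten_concat]
  rw [hcB] at hw
  have hc_le_B : c.length ≤ B.length := by simp [B, List.replicate_succ]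
  have hw_length : w.toWord.length = u.length + (c.length + B.length) + u.length := by
    simp only [hw, List.length_append, invRev_length]
  let middle := ((u.length, B), (u.length + c.length, B))
  let ends := ((0, u), (u.length + (c ++ B).length, invRev u))
  -- For `u = []` the end pair is degenerate and the middle pair is used twice instead.
  refine ⟨fun i => if u = [] ∨ i = 0 then middle else ends, fun i => ?_, fun j hj => ?_⟩
  · dsimp only
    split_ifs with h
    · exact isRepeatPair_of_toWord_eq_append_comm hw (hcB.symm.trans hBc) hc (by simp [B, hc])
    · exact isRepeatPair_of_toWord_eq_append_invRev hw (not_or.1 h).1 (by simp [hc])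
  · by_cases hmid : u.length ≤ j ∧ j < u.length + (c.length + B.length)
    · exact ⟨0, by simp only [Fin.isValue, or_true, ↓reduceIte, middle, CoversPos]; omega⟩
    · have hu : u ≠ [] := by
        rintro rfl
        simp only [List.length_nil] at hw_length hmid
        omega
      exact ⟨1, by
        simp only [hu, Fin.isValue, one_ne_zero, or_self, ↓reduceIte, ends, CoversPos,
          List.length_append, invRev_length]
        omega⟩

end Subwords

theorem reduceCyclically_toWord_ne_nil {g : FreeGroup α} (hg : g ≠ 1) :
    reduceCyclically g.toWord ≠ [] := by
  intro hc
  have hdecomp := reduceCyclically.conj_conjugator_reduceCyclically g.toWord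
  rw [hc, List.append_nil] at hdecomp
  apply hg
  rw [← mk_toWord (x := g), ← hdecomp, ← mul_mk, ← inv_mk, mul_inv_cancel]

theorem toWord_pow_of_ne_zero (g : FreeGroup α) {m : ℕ} (hm : m ≠ 0) :
    (g ^ m).toWord = reduceCyclically.conjugator g.toWord ++
      (List.replicate m (reduceCyclically g.toWord)).flatten ++
        invRev (reduceCyclically.conjugator g.toWord) := by
  rw [toWord_pow, reduceCyclically.reduce_flatten_replicate isReduced_toWord, if_neg hm]

theorem negligible_setOf_pow {m : ℕ} (hm : 2 ≤ m) :
    Negligible {x : FreeGroup α | ∃ g : FreeGroup α, x = g ^ m} := by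
  refine negligible_of_forall_covered 2 {1} ?_
  rintro _ ⟨g, rfl⟩ hw
  have hg : g ≠ 1 := by
    rintro rfl
    simp at hw
  obtain ⟨k, rfl⟩ := Nat.exists_eq_add_of_le' hm
  exact exists_repeatPairs_covering_of_toWord_eq (toWord_pow_of_ne_zero g (by omega))
    (reduceCyclically_toWord_ne_nil hg)

end FreeGroup

theorem negligible_powers_general (n : ℕ) (m : ℕ) (hm : 2 ≤ m) :
    Negligible {x : FreeGroup (Fin n) | ∃ g : FreeGroup (Fin n), x = g ^ m} :=
  FreeGroup.negligible_setOf_pow hm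

/-- For `m ≥ 2`, the set of `m`-th powers in a nonabelian free group of finite rank is
negligible. -/
theorem negligible_powers (n : ℕ) (hn : 2 ≤ n) (m : ℕ) (hm : 2 ≤ m) :
    Negligible {x : FreeGroup (Fin n) | ∃ g : FreeGroup (Fin n), x = g ^ m} :=
  negligible_powers_general n m hm
end

section
/- Let F be the free group on free generators e_1, …, e_n with n ≥ 2, and let B = ⟨e_1⟩ be the cyclic subgroup generated by e_1 (which equals the centralizer C(e_1)). Then the union of all conjugates of B, namely ⋃_{g ∈ F} g⁻¹·B·g = {g⁻¹·e_1^m·g : g ∈ F, m ∈ ℤ}, is a negligible subset of F. -/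
open FirstOrder

/-!
Absorbing the leading letters `e₁^{±1}` of the conjugator into the power, every nontrivial
`g⁻¹ e₁^m g` has reduced word `v⁻¹ e₁^|m| v` without cancellation. Its prefix `v⁻¹` and suffix `v`
form one pair of mutually inverse subwords, and the two copies of `e₁^(|m|-1)` starting at the
first and second letter of the middle block form another. Together they cover every letter except
possibly the middle one (when `|m| = 1`), so two pairs leave at most one letter uncovered, which is
eventually below `ε · length`.
-/

namespace FreeGroup

variable {α : Type*}

theorem IsReduced.invRev [DecidableEq α] {L : List (α × Bool)} (h : IsReduced L) :
    IsReduced (invRev L) :=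
  isReduced_iff_reduce_eq.2 (by rw [reduce_invRev, h.reduce_eq])

theorem invRev_replicate (M : ℕ) (x : α × Bool) :
    invRev (List.replicate M x) = List.replicate M (x.1, !x.2) := by
  simp [invRev]

theorem exists_toWord_of_zpow [DecidableEq α] (a : α) (m : ℤ) :
    ∃ b, (of a ^ m).toWord = List.replicate m.natAbs (a, b) := by
  obtain ⟨n, rfl | rfl⟩ := Int.eq_nat_or_neg m
  · exact ⟨true, by simp [toWord_of_pow]⟩
  · exact ⟨false, by simp [toWord_inv, toWord_of_pow, invRev_replicate]⟩

theorem toWord_inv_mul_mul [DecidableEq α] (x h : FreeGroup α) :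
    (h⁻¹ * x * h).toWord = reduce (invRev h.toWord ++ x.toWord ++ h.toWord) := by
  conv_lhs => rw [← mk_toWord (x := h), ← mk_toWord (x := x), inv_mk, mul_mk, mul_mk]
  rw [toWord_mk]

theorem isReduced_replicate_append {v : List (α × Bool)} (hv : IsReduced v) {a : α}
    (ha : ∀ x ∈ v.head?, x.1 ≠ a) (M : ℕ) (b : Bool) :
    IsReduced (List.replicate M (a, b) ++ v) := by
  refine List.isChain_append.2 ⟨List.isChain_replicate_of_rel _ fun _ => rfl, hv, ?_⟩
  intro x hx y hy hxy
  obtain rfl := List.eq_of_mem_replicate (List.mem_of_getLast? hx)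
  exact absurd hxy.symm (ha y hy)

theorem isReduced_invRev_append_replicate_append [DecidableEq α] {v : List (α × Bool)}
    (hv : IsReduced v) {a : α} (ha : ∀ x ∈ v.head?, x.1 ≠ a) {M : ℕ} (hM : M ≠ 0) (b : Bool) :
    IsReduced (invRev v ++ List.replicate M (a, b) ++ v) := by
  have hleft := (isReduced_replicate_append hv ha M !b).invRev
  rw [invRev_append, invRev_replicate, Bool.not_not] at hleft
  exact hleft.append_overlap (isReduced_replicate_append hv ha M b) (by simpa using hM)

theorem exists_mk_singleton_eq_of_zpow (a : α) (b : Bool) : ∃ k : ℤ, mk [(a, b)] = of a ^ k := by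
  cases b
  · exact ⟨-1, by rw [zpow_neg_one, of, inv_mk]; rfl⟩
  · exact ⟨1, by rw [zpow_one]; rfl⟩

/-- Choose the power of `a` minimising the length: a leading letter `a^{±1}` could otherwise be
absorbed into the power. -/
theorem exists_head_toWord_zpow_mul_ne [DecidableEq α] (a : α) (g : FreeGroup α) :
    ∃ j : ℤ, ∀ x ∈ (of a ^ j * g).toWord.head?, x.1 ≠ a := by
  let len : ℤ → ℕ := fun j => (of a ^ j * g).toWord.length
  refine ⟨Function.argmin len, ?_⟩
  rcases hw : (of a ^ Function.argmin len * g).toWord with _ | ⟨⟨c, b⟩, t⟩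
  · simp
  rintro x hx rfl
  obtain rfl := Option.mem_some_iff.1 hx
  obtain ⟨k, hk⟩ := exists_mk_singleton_eq_of_zpow c b
  have ht : IsReduced t := (hw ▸ isReduced_toWord).infix (List.suffix_cons _ _).isInfix
  have hg : of c ^ Function.argmin len * g = mk [(c, b)] * mk t := by
    rw [← mk_toWord (x := of c ^ _ * g), hw, mul_mk]
    rfl
  have hmk : of c ^ (-k + Function.argmin len) * g = mk t := by
    rw [zpow_add, zpow_neg, ← hk, mul_assoc, hg, inv_mul_cancel_left]
  have := Function.argmin_le len (-k + Function.argmin len)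
  simp only [len, hmk, toWord_mk, ht.reduce_eq, hw, List.length_cons] at this
  omega

theorem exists_toWord_conj_zpow_of [DecidableEq α] (a : α) {m : ℤ} (hm : m ≠ 0)
    (g : FreeGroup α) : ∃ (v : List (α × Bool)) (b : Bool),
      (g⁻¹ * of a ^ m * g).toWord = invRev v ++ List.replicate m.natAbs (a, b) ++ v := by
  obtain ⟨j, hj⟩ := exists_head_toWord_zpow_mul_ne a g
  obtain ⟨b, hb⟩ := exists_toWord_of_zpow a m
  refine ⟨(of a ^ j * g).toWord, b, ?_⟩
  have hconj : g⁻¹ * of a ^ m * g = (of a ^ j * g)⁻¹ * of a ^ m * (of a ^ j * g) := by group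
  rw [hconj, toWord_inv_mul_mul, hb]
  exact (isReduced_invRev_append_replicate_append isReduced_toWord hj
    (Int.natAbs_ne_zero.2 hm) b).reduce_eq

end FreeGroup

open FreeGroup

section EmbeddedSubwords

variable {α : Type*} [DecidableEq α] {w : FreeGroup α}

theorem isProperEmbeddedSubword_of_toWord_eq {l₁ u l₂ : List (α × Bool)}
    (h : w.toWord = l₁ ++ u ++ l₂) (hu : u ≠ []) (hl : l₁ ++ l₂ ≠ []) :
    IsProperEmbeddedSubword w (l₁.length, u) := by
  refine ⟨⟨hu, by simp [h]⟩, ?_⟩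
  have := List.length_pos_iff.2 hl
  rw [List.length_append] at this
  simp only [h, List.length_append]
  omega

def IsRepeatedPair (w : FreeGroup α) (p : (ℕ × List (α × Bool)) × (ℕ × List (α × Bool))) :
    Prop :=
  IsProperEmbeddedSubword w p.1 ∧ IsProperEmbeddedSubword w p.2 ∧
    (p.2.2 = p.1.2 ∨ p.2.2 = invWord p.1.2) ∧ p.1 ≠ p.2

theorem isRepeatedPair_invRev {u v : List (α × Bool)} (h : w.toWord = invRev v ++ u ++ v)
    (hv : v ≠ []) : IsRepeatedPair w ((0, invRev v), (v.length + u.length, v)) := by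
  have hlen := List.length_pos_iff.2 hv
  refine ⟨?_, ?_, Or.inr invRev_invRev.symm, by rw [Ne, Prod.mk.injEq]; omega⟩
  · exact isProperEmbeddedSubword_of_toWord_eq (l₁ := []) (by simpa using h)
      (by simpa [invRev] using hv) (by simp [hv])
  · simpa using isProperEmbeddedSubword_of_toWord_eq (l₁ := invRev v ++ u) (l₂ := [])
      (by rw [h, List.append_nil]) hv (by simp [invRev, hv])

theorem isRepeatedPair_replicate {l₁ l₂ : List (α × Bool)} {M : ℕ} {c : α × Bool}
    (h : w.toWord = l₁ ++ List.replicate (M + 2) c ++ l₂) :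
    IsRepeatedPair w ((l₁.length, List.replicate (M + 1) c),
      (l₁.length + 1, List.replicate (M + 1) c)) := by
  refine ⟨?_, ?_, Or.inl rfl, by simp⟩
  · exact isProperEmbeddedSubword_of_toWord_eq (l₂ := c :: l₂)
      (by rw [h, List.replicate_succ']; simp) (by simp) (by simp)
  · simpa using isProperEmbeddedSubword_of_toWord_eq (l₁ := l₁ ++ [c]) (l₂ := l₂)
      (by rw [h, List.replicate_succ]; simp) (by simp) (by simp)

def uncoveredPositions {N : ℕ} (w : FreeGroup α)
    (sub : Fin N → (ℕ × List (α × Bool)) × (ℕ × List (α × Bool))) : Set ℕ :=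
  {j | j < w.toWord.length ∧ ∀ i, ¬ CoversPos (sub i).1 j ∧ ¬ CoversPos (sub i).2 j}

theorem exists_repeatedPairs_of_toWord_eq {v : List (α × Bool)} {M : ℕ} {c : α × Bool}
    (h : w.toWord = invRev v ++ List.replicate M c ++ v) (hw : 1 < w.toWord.length) :
    ∃ sub : Fin 2 → (ℕ × List (α × Bool)) × (ℕ × List (α × Bool)),
      (∀ i, IsRepeatedPair w (sub i)) ∧ uncoveredPositions w sub ⊆ {v.length} := by
  have hlen : w.toWord.length = v.length + M + v.length := by
    simp only [h, List.length_append, List.length_replicate, invRev_length]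
  rcases Nat.lt_or_ge M 2 with hM | hM
  · have hv : v ≠ [] := by
      rintro rfl
      rw [hlen, List.length_nil] at hw
      omega
    refine ⟨fun _ => _, fun _ => isRepeatedPair_invRev h hv, ?_⟩
    rintro j ⟨hj, hcov⟩
    have := hcov 0
    simp only [CoversPos, List.length_replicate, invRev_length] at this
    simp only [Set.mem_singleton_iff]
    omega
  obtain ⟨M, rfl⟩ := Nat.exists_eq_add_of_le' hM
  have hC := isRepeatedPair_replicate h
  by_cases hv : v = []
  · subst hv
    refine ⟨fun _ => _, fun _ => hC, ?_⟩
    rintro j ⟨hj, hcov⟩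
    have := hcov 0
    simp only [CoversPos, List.length_replicate, invRev_length, List.length_nil] at this hlen
    simp only [Set.mem_singleton_iff, List.length_nil]
    omega
  · refine ⟨![_, _], Fin.forall_fin_two.2 ⟨isRepeatedPair_invRev h hv, hC⟩, ?_⟩
    rintro j ⟨hj, hcov⟩
    have h₀ := hcov 0
    have h₁ := hcov 1
    simp only [CoversPos, List.length_replicate, invRev_length, Matrix.cons_val_zero,
      Matrix.cons_val_one] at h₀ h₁
    simp only [Set.mem_singleton_iff]
    omega

end EmbeddedSubwords

theorem negligible_of_ncard_uncoveredPositions_le {α : Type*} [DecidableEq α] [Finite α]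
    {X : Set (FreeGroup α)} (N C L : ℕ)
    (h : ∀ w ∈ X, L < w.toWord.length →
      ∃ sub : Fin N → (ℕ × List (α × Bool)) × (ℕ × List (α × Bool)),
        (∀ i, IsRepeatedPair w (sub i)) ∧ (uncoveredPositions w sub).ncard ≤ C) :
    Negligible X := by
  refine ⟨N, fun ε hε => ?_⟩
  set L₀ := max L ⌈(C : ℝ) / ε⌉₊
  have hfin : {w : FreeGroup α | w.toWord.length ≤ L₀}.Finite :=
    (List.finite_length_le (α × Bool) L₀).preimage toWord_injective.injOn
  refine ⟨hfin.toFinset, fun w hw hwS => ?_⟩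
  replace hwS : L₀ < w.toWord.length := not_le.1 (by simpa using hwS)
  obtain ⟨sub, hsub, hC⟩ := h w hw ((le_max_left _ _).trans_lt hwS)
  refine ⟨sub, fun i => ⟨(hsub i).1, (hsub i).2.1⟩, fun i => (hsub i).2.2.1,
    fun i => (hsub i).2.2.2, ?_⟩
  have hlong : (C : ℝ) / ε < w.toWord.length :=
    (Nat.le_ceil _).trans_lt (by exact_mod_cast (le_max_right _ _).trans_lt hwS)
  rw [div_lt_iff₀ hε] at hlong
  show ((uncoveredPositions w sub).ncard : ℝ) ≤ ε * w.toWord.length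
  linarith [(Nat.cast_le (α := ℝ)).2 hC]

/-- In the free group on `n ≥ 2` generators, the union of all conjugates of the cyclic
subgroup `B = ⟨e₁⟩ = C(e₁)` is negligible. -/
theorem negligible_union_conjugates (n : ℕ) (hn : 2 ≤ n) :
    Negligible {x : FreeGroup (Fin n) | ∃ (g : FreeGroup (Fin n)) (m : ℤ),
      x = g⁻¹ * (FreeGroup.of (⟨0, by omega⟩ : Fin n)) ^ m * g} := by
  refine negligible_of_ncard_uncoveredPositions_le 2 1 1 ?_
  rintro _ ⟨g, m, rfl⟩ hlong
  have hm : m ≠ 0 := by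
    rintro rfl
    simp at hlong
  obtain ⟨v, b, hv⟩ := exists_toWord_conj_zpow_of _ hm g
  obtain ⟨sub, hsub, hunc⟩ := exists_repeatedPairs_of_toWord_eq hv hlong
  exact ⟨sub, hsub, (Set.ncard_le_ncard hunc).trans (Set.ncard_singleton _).le⟩
end

section
/- Let F be the free group on free generators e_1, e_2, e_3, e_4, …, e_n with n ≥ 4, and fix a positive integer k. Then the set Y = { e_1^k · (e_4^{-1}·e_1^k) · (e_4^{-2}·e_1^k) ⋯ (e_4^{-(n-1)}·e_1^k) · e_4^{n(n-1)/2} : n = 1, 2, 3, … } is a non-negligible subset of F. -/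
open FirstOrder

/-!
Write `a = e₁` and `b = e₄`. The reduced word of the `n`-th element of `Y` is
`b⁰aᵏ b⁻¹aᵏ ⋯ b⁻⁽ⁿ⁻¹⁾aᵏ b^(n choose 2)`; its prefix before the final power of `b` makes up at
least half of it. A subword occurring twice, or together with its inverse, covers only
`O(n + k)` letters of that prefix: a window of `k + 2n + 1` prefix letters contains a whole maximal
run `b⁻ʲ`, whose length `j` determines its position, and it contains a letter `a`, whose inverse
never occurs. So `N` pairs of subwords leave `Ω(n²)` letters uncovered, more than a quarter of
the word for large `n`.
-/

open Filter

section Subwords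

variable {α : Type*}

lemma map_range_eq_replicate {β : Type*} {f : ℕ → β} {x : β} {m : ℕ} (h : ∀ t < m, f t = x) :
    (List.range m).map f = List.replicate m x := by
  simpa using List.map_eq_replicate_iff.2 fun t ht ↦ h t (List.mem_range.1 ht)

lemma invWord_invWord (u : List (α × Bool)) : invWord (invWord u) = u := by
  simp [invWord, List.map_reverse, Function.comp_def]

lemma length_invWord (u : List (α × Bool)) : (invWord u).length = u.length := by
  simp [invWord]

lemma getElem_invWord (u : List (α × Bool)) {t : ℕ} (ht : t < u.length) :
    (invWord u)[u.length - 1 - t]'(by rw [length_invWord]; omega) = (u[t].1, !u[t].2) := by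
  simp only [invWord, List.getElem_reverse, List.getElem_map, List.length_map]
  congr <;> omega

open Finset in
lemma card_filter_coversPos_le {P B : ℕ} {s : ℕ × List (α × Bool)}
    [DecidablePred (CoversPos s)] (h : min (s.1 + s.2.length) P ≤ s.1 + B) :
    ((range P).filter (CoversPos s)).card ≤ B := by
  calc _ ≤ (Ico s.1 (s.1 + B)).card := card_le_card fun j hj ↦ by
        simp only [mem_filter, mem_range, CoversPos, mem_Ico] at hj ⊢
        omega
    _ = B := by simp

open Classical Finset in
lemma le_card_uncovered_add {N P B : ℕ}
    (sub : Fin N → (ℕ × List (α × Bool)) × (ℕ × List (α × Bool)))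
    (h : ∀ i, min ((sub i).1.1 + (sub i).1.2.length) P ≤ (sub i).1.1 + B ∧
      min ((sub i).2.1 + (sub i).2.2.length) P ≤ (sub i).2.1 + B) :
    P ≤ ((range P).filter fun j ↦ ∀ i, ¬ CoversPos (sub i).1 j ∧ ¬ CoversPos (sub i).2 j).card
      + 2 * N * B := by
  set U := (range P).filter fun j ↦ ∀ i, ¬ CoversPos (sub i).1 j ∧ ¬ CoversPos (sub i).2 j
  have hcover : range P ⊆ U ∪ univ.biUnion fun i ↦
      (range P).filter (CoversPos (sub i).1) ∪ (range P).filter (CoversPos (sub i).2) := by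
    intro j hj
    by_cases hU : j ∈ U
    · exact mem_union_left _ hU
    · simp only [U, mem_filter, hj, true_and, not_forall, not_and_or, not_not] at hU
      obtain ⟨i, hi⟩ := hU
      exact mem_union_right _ (mem_biUnion.2 ⟨i, mem_univ _, by simpa [hj] using hi⟩)
  have hpair : ∀ i ∈ univ, ((range P).filter (CoversPos (sub i).1) ∪
      (range P).filter (CoversPos (sub i).2)).card ≤ 2 * B := fun i _ ↦ by
    have h₁ := card_filter_coversPos_le (h i).1
    have h₂ := card_filter_coversPos_le (h i).2
    exact (card_union_le _ _).trans (by omega)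
  calc P = (range P).card := (card_range P).symm
    _ ≤ _ := card_le_card hcover
    _ ≤ U.card + univ.card * (2 * B) :=
        (card_union_le _ _).trans (Nat.add_le_add_left (card_biUnion_le_card_mul _ _ _ hpair) _)
    _ = U.card + 2 * N * B := by rw [card_univ, Fintype.card_fin]; ring

variable [DecidableEq α]

lemma getElem?_toWord_of_isEmbeddedSubword {w : FreeGroup α} {s : ℕ × List (α × Bool)}
    (hs : IsEmbeddedSubword w s) {t : ℕ} (ht : t < s.2.length) :
    w.toWord[s.1 + t]? = some s.2[t] := by
  rw [← List.getElem?_drop, ← List.getElem?_take_of_lt ht, hs.2, List.getElem?_eq_getElem ht]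

/-- Every embedded subword of `w` that occurs a second time, possibly inverted, covers at most
`B` letters of the prefix of length `P` of `w`. -/
def RepeatsShortOnPrefix (w : FreeGroup α) (P B : ℕ) : Prop :=
  ∀ s s' : ℕ × List (α × Bool), IsEmbeddedSubword w s → IsEmbeddedSubword w s' →
    (s'.2 = s.2 ∨ s'.2 = invWord s.2) → s ≠ s' → min (s.1 + s.2.length) P ≤ s.1 + B

lemma RepeatsShortOnPrefix.min_le_both {w : FreeGroup α} {P B : ℕ}
    (hw : RepeatsShortOnPrefix w P B) {s s' : ℕ × List (α × Bool)}
    (hs : IsEmbeddedSubword w s) (hs' : IsEmbeddedSubword w s')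
    (hrel : s'.2 = s.2 ∨ s'.2 = invWord s.2) (hne : s ≠ s') :
    min (s.1 + s.2.length) P ≤ s.1 + B ∧ min (s'.1 + s'.2.length) P ≤ s'.1 + B := by
  refine ⟨hw s s' hs hs' hrel hne, hw s' s hs' hs ?_ hne.symm⟩
  rcases hrel with h | h
  · exact Or.inl h.symm
  · exact Or.inr (by rw [h, invWord_invWord])

/-- Negligibility is tested with `ε = 1/4`: the `2N` subwords cover at most `2NB` letters of the
prefix, so at least `P - 2NB` letters stay uncovered. -/
theorem not_negligible_of_repeatsShortOnPrefix {X : Set (FreeGroup α)} (w : ℕ → FreeGroup α)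
    (P B : ℕ → ℕ) (hlen : Tendsto (fun n ↦ (w n).toWord.length) atTop atTop)
    (hw : ∀ᶠ n in atTop, w n ∈ X ∧ P n ≤ (w n).toWord.length ∧
      RepeatsShortOnPrefix (w n) (P n) (B n))
    (hdense : ∀ N : ℕ, ∀ᶠ n in atTop, (w n).toWord.length + 8 * N * B n < 4 * P n) :
    ¬ Negligible X := by
  classical
  rintro ⟨N, hN⟩
  obtain ⟨S, hS⟩ := hN (1 / 4) (by norm_num)
  have hnotS : ∀ᶠ n in atTop, w n ∉ S :=
    (hlen.eventually_gt_atTop (S.sup fun v ↦ v.toWord.length)).mono fun n hn hmem ↦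
      (Finset.le_sup (f := fun v ↦ v.toWord.length) hmem).not_gt hn
  obtain ⟨n, ⟨hX, hP, hrep⟩, hnS, hbig⟩ := (hw.and (hnotS.and (hdense N))).exists
  obtain ⟨sub, hsub, hrel, hne, hcount⟩ := hS (w n) hX hnS
  have hcover := le_card_uncovered_add sub fun i ↦
    hrep.min_le_both (hsub i).1.1 (hsub i).2.1 (hrel i) (hne i)
  set V := {j : ℕ | j < (w n).toWord.length ∧
    ∀ i, ¬ CoversPos ((sub i).1) j ∧ ¬ CoversPos ((sub i).2) j}
  have hsubset : ↑((Finset.range (P n)).filter fun j ↦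
      ∀ i, ¬ CoversPos (sub i).1 j ∧ ¬ CoversPos (sub i).2 j) ⊆ V := fun j hj ↦ by
    simp only [Finset.coe_filter, Finset.mem_range] at hj
    exact ⟨hj.1.trans_le hP, hj.2⟩
  have hcard := Set.ncard_le_ncard hsubset ((Set.finite_Iio _).subset fun j hj ↦ hj.1)
  rw [Set.ncard_coe_finset] at hcard
  have hV : 4 * V.ncard ≤ (w n).toWord.length := by
    exact_mod_cast (show (4 * V.ncard : ℝ) ≤ (w n).toWord.length by linarith)
  have : 8 * N * B n = 4 * (2 * N * B n) := by ring
  omega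

end Subwords

namespace Staircase

variable {α : Type*} {a b : α} {k n : ℕ}

/-- The word `b⁰aᵏ b⁻¹aᵏ b⁻²aᵏ ⋯` is cut into chunks `b⁻ʲaᵏ`; this is where chunk `j` starts. -/
def chunkStart (k j : ℕ) : ℕ := j * k + j.choose 2

lemma chunkStart_zero (k : ℕ) : chunkStart k 0 = 0 := by simp [chunkStart]

lemma chunkStart_succ (k j : ℕ) : chunkStart k (j + 1) = chunkStart k j + j + k := by
  simp only [chunkStart, Nat.choose_succ_succ', Nat.choose_one_right]
  ring

lemma chunkStart_mono (k : ℕ) : Monotone (chunkStart k) := fun _ _ h ↦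
  Nat.add_le_add (Nat.mul_le_mul_right k h) (Nat.choose_le_choose 2 h)

lemma chunkStart_add_le_of_lt (k : ℕ) {i j : ℕ} (h : i < j) :
    chunkStart k i + i + k ≤ chunkStart k j :=
  chunkStart_succ k i ▸ chunkStart_mono k h

lemma lt_of_chunkStart_le_lt {i j : ℕ} (h : chunkStart k j ≤ i) (hi : i < chunkStart k n) :
    j < n :=
  lt_of_not_ge fun hnj ↦ (chunkStart_mono k hnj).not_gt (h.trans_lt hi)

lemma exists_chunkStart_le_lt (hk : 0 < k) (i : ℕ) :
    ∃ j, chunkStart k j ≤ i ∧ i < chunkStart k (j + 1) := by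
  induction i with
  | zero => exact ⟨0, (chunkStart_zero k).le, by rw [chunkStart_succ, chunkStart_zero]; omega⟩
  | succ i ih =>
    obtain ⟨j, hj, hij⟩ := ih
    by_cases h : i + 1 < chunkStart k (j + 1)
    · exact ⟨j, by omega, h⟩
    · exact ⟨j + 1, by omega, by rw [chunkStart_succ k (j + 1)]; omega⟩

def InNegPart (k i : ℕ) : Prop := ∃ j, chunkStart k j ≤ i ∧ i < chunkStart k j + j

lemma inNegPart_chunkStart_add {j t : ℕ} (ht : t < j) : InNegPart k (chunkStart k j + t) :=
  ⟨j, by omega, by omega⟩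

lemma not_inNegPart_chunkStart_add_add {j t : ℕ} (ht : t < k) :
    ¬ InNegPart k (chunkStart k j + j + t) := by
  rintro ⟨j', h1, h2⟩
  rcases le_or_gt j' j with h | h
  · have := chunkStart_mono k h
    omega
  · have := chunkStart_add_le_of_lt k h
    omega

open Classical in
/-- The letters of the infinite word `b⁰aᵏ b⁻¹aᵏ b⁻²aᵏ ⋯`. -/
noncomputable def prefixLetter (a b : α) (k i : ℕ) : α × Bool :=
  if InNegPart k i then (b, false) else (a, true)

/-- The letters of `b⁰aᵏ b⁻¹aᵏ ⋯ b⁻⁽ⁿ⁻¹⁾aᵏ b^(n choose 2)`, continued by `b` forever. -/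
noncomputable def letter (a b : α) (k n i : ℕ) : α × Bool :=
  if i < chunkStart k n then prefixLetter a b k i else (b, true)

noncomputable def word (a b : α) (k n : ℕ) : List (α × Bool) :=
  (List.range (chunkStart k n + n.choose 2)).map (letter a b k n)

lemma length_word : (word a b k n).length = chunkStart k n + n.choose 2 := by
  simp [word]

lemma prefixLetter_chunkStart_add {j t : ℕ} (ht : t < j) :
    prefixLetter a b k (chunkStart k j + t) = (b, false) :=
  if_pos (inNegPart_chunkStart_add ht)

lemma prefixLetter_chunkStart_add_add {j t : ℕ} (ht : t < k) :
    prefixLetter a b k (chunkStart k j + j + t) = (a, true) :=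
  if_neg (not_inNegPart_chunkStart_add_add ht)

lemma prefixLetter_eq_neg_iff {i : ℕ} : prefixLetter a b k i = (b, false) ↔ InNegPart k i := by
  unfold prefixLetter
  split_ifs with h <;> simp [h]

lemma letter_of_lt {i : ℕ} (h : i < chunkStart k n) : letter a b k n i = prefixLetter a b k i :=
  if_pos h

lemma prefixLetter_eq_of_letter_eq {i : ℕ} {x : α × Bool} (h : letter a b k n i = x)
    (hx : x ≠ (b, true)) : prefixLetter a b k i = x := by
  unfold letter at h
  split_ifs at h
  exacts [h, absurd h.symm hx]

lemma letter_ne_a_inv (hab : a ≠ b) (i : ℕ) : letter a b k n i ≠ (a, false) := by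
  unfold letter prefixLetter
  split_ifs <;> simp [hab.symm]

lemma lt_of_forall_prefixLetter_eq_neg (hk : 0 < k) {x m : ℕ} (hx : x < chunkStart k n)
    (hrun : ∀ t ≤ m, prefixLetter a b k (x + t) = (b, false)) : m < n := by
  obtain ⟨j, hj, hxj⟩ := prefixLetter_eq_neg_iff.1 (hrun 0 (Nat.zero_le m))
  have hjn := lt_of_chunkStart_le_lt hj hx
  by_contra! hm
  have h := hrun (chunkStart k j + j - x) (by omega)
  rw [show x + (chunkStart k j + j - x) = chunkStart k j + j + 0 by omega,
    prefixLetter_chunkStart_add_add hk] at h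
  simp at h

lemma eq_chunkStart_of_maximal_run (hk : 0 < k) {y j : ℕ} (hj : 0 < j)
    (hl : prefixLetter a b k y = (a, true))
    (hrun : ∀ t < j, prefixLetter a b k (y + 1 + t) = (b, false))
    (hr : prefixLetter a b k (y + 1 + j) = (a, true)) : y + 1 = chunkStart k j := by
  have hneg : ∀ {i}, prefixLetter a b k i = (a, true) → ¬ InNegPart k i := fun h hi ↦ by
    simp [prefixLetter_eq_neg_iff.2 hi] at h
  obtain ⟨j', h1, h2⟩ := prefixLetter_eq_neg_iff.1 (hrun 0 hj)
  have hstart : y + 1 = chunkStart k j' := by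
    by_contra
    exact hneg hl ⟨j', by omega, by omega⟩
  have hle : j' ≤ j := by
    by_contra
    exact hneg hr ⟨j', by omega, by omega⟩
  have hge : j ≤ j' := by
    by_contra
    have h := hrun j' (by omega)
    rw [hstart, ← add_zero (_ + j'), prefixLetter_chunkStart_add_add hk] at h
    simp at h
  rwa [le_antisymm hge hle]

/-- A window of `k + 2n + 1` letters starting in the prefix occurs only once: it contains a whole
maximal run `b⁻ʲ` (with `j ≥ 1`), and `j` determines the position of that run. -/
lemma eq_of_letter_shift (hab : a ≠ b) (hk : 0 < k) {p q : ℕ}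
    (hp : p + (k + 2 * n) < chunkStart k n)
    (h : ∀ t ≤ k + 2 * n, letter a b k n (p + t) = letter a b k n (q + t)) : p = q := by
  obtain ⟨j, hj, hpj⟩ := exists_chunkStart_le_lt hk p
  have hjn : j < n := lt_of_chunkStart_le_lt hj (by omega)
  have hx := chunkStart_succ k j
  have hcopy : ∀ {i : ℕ} {x : α × Bool}, p ≤ i → i ≤ p + (k + 2 * n) →
      prefixLetter a b k i = x → x ≠ (b, true) → prefixLetter a b k (q + (i - p)) = x := by
    intro i x h1 h2 hi hx
    refine prefixLetter_eq_of_letter_eq (n := n) ?_ hx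
    rw [← h (i - p) (by omega), show p + (i - p) = i by omega, letter_of_lt (by omega), hi]
  have hab' : (a, true) ≠ (b, true) := by simp [hab]
  have key := eq_chunkStart_of_maximal_run hk (y := q + (chunkStart k (j + 1) - 1 - p))
    (j := j + 1) (by omega)
    (hcopy (by omega) (by omega) (by
      rw [show chunkStart k (j + 1) - 1 = chunkStart k j + j + (k - 1) by omega]
      exact prefixLetter_chunkStart_add_add (by omega)) hab')
    (fun t ht ↦ by
      rw [show q + (chunkStart k (j + 1) - 1 - p) + 1 + t = q + (chunkStart k (j + 1) + t - p)
        by omega]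
      exact hcopy (by omega) (by omega) (prefixLetter_chunkStart_add ht) (by simp))
    (by
      rw [show q + (chunkStart k (j + 1) - 1 - p) + 1 + (j + 1)
        = q + (chunkStart k (j + 1) + (j + 1) + 0 - p) by omega]
      exact hcopy (by omega) (by omega) (prefixLetter_chunkStart_add_add hk) hab')
  omega

/-- Among `n + 1` consecutive letters of the prefix there is one whose inverse does not occur:
otherwise they would all be `b⁻¹`, since `a⁻¹` never occurs and `b` only after the prefix. -/
lemma exists_inv_ne_letter (hab : a ≠ b) (hk : 0 < k) {p : ℕ} (hp : p + n < chunkStart k n) :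
    ∃ t ≤ n, ∀ i, letter a b k n i ≠
      ((letter a b k n (p + t)).1, !(letter a b k n (p + t)).2) := by
  by_contra! h
  refine (lt_of_forall_prefixLetter_eq_neg (a := a) (b := b) hk (x := p) (m := n) (by omega)
    fun t ht ↦ ?_).false
  obtain ⟨i, hi⟩ := h t ht
  rw [letter_of_lt (i := p + t) (by omega)] at hi
  unfold prefixLetter at hi ⊢
  split_ifs at hi ⊢
  · rfl
  · exact absurd hi (by simpa using letter_ne_a_inv hab i)

lemma letter_eq_getElem [DecidableEq α] {w : FreeGroup α} (hw : w.toWord = word a b k n)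
    {s : ℕ × List (α × Bool)} (hs : IsEmbeddedSubword w s) {t : ℕ} (ht : t < s.2.length) :
    letter a b k n (s.1 + t) = s.2[t] := by
  have h := getElem?_toWord_of_isEmbeddedSubword hs ht
  rw [hw] at h
  obtain ⟨_, h⟩ := List.getElem?_eq_some_iff.1 h
  simpa [word] using h

theorem repeatsShortOnPrefix_of_toWord_eq [DecidableEq α] (hab : a ≠ b) (hk : 0 < k)
    {w : FreeGroup α} (hw : w.toWord = word a b k n) : RepeatsShortOnPrefix w (chunkStart k n) (k + 2 * n) := by
  rintro ⟨p, u⟩ ⟨q, u'⟩ hs hs' hrel hne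
  by_contra! hlong
  rw [lt_min_iff] at hlong
  dsimp only at hlong hrel
  rcases hrel with rfl | rfl
  · have hshift : ∀ t ≤ k + 2 * n, letter a b k n (p + t) = letter a b k n (q + t) := fun t ht ↦
      (letter_eq_getElem hw hs (t := t) (by dsimp only; omega)).trans
        (letter_eq_getElem hw hs' (by dsimp only; omega)).symm
    exact hne (by rw [eq_of_letter_shift hab hk hlong.2 hshift])
  · obtain ⟨t, ht, hinv⟩ := exists_inv_ne_letter hab hk (n := n) (p := p) (by omega)
    have htu : t < u.length := by omega
    refine hinv (q + (u.length - 1 - t)) ?_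
    rw [letter_eq_getElem hw hs' (by dsimp only; rw [length_invWord]; omega),
      letter_eq_getElem hw hs htu]
    exact getElem_invWord u htu

open FreeGroup

lemma isReduced_word (hab : a ≠ b) (hk : 0 < k) : IsReduced (word a b k n) := by
  rw [FreeGroup.IsReduced, word, List.isChain_map, List.isChain_range]
  intro i _
  have hlast : i + 1 = chunkStart k n → ¬ InNegPart k i := by
    intro h
    obtain ⟨n, rfl⟩ : ∃ n', n = n' + 1 :=
      Nat.exists_eq_succ_of_ne_zero (by rintro rfl; simp [chunkStart_zero] at h)
    rw [show i = chunkStart k n + n + (k - 1) by rw [chunkStart_succ] at h; omega]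
    exact not_inNegPart_chunkStart_add_add (by omega)
  unfold letter prefixLetter
  split_ifs <;> simp_all [hab.symm] <;> omega

lemma of_pow_eq_mk (x : α) (q : ℕ) : of x ^ q = mk (List.replicate q (x, true)) := by
  rw [← List.flatten_replicate_singleton, ← pow_mk]
  rfl

lemma of_zpow_neg_eq_mk (x : α) (q : ℕ) : of x ^ (-(q : ℤ)) = mk (List.replicate q (x, false)) := by
  rw [zpow_neg, zpow_natCast, of_pow_eq_mk, inv_mk]
  simp [invRev]

lemma prod_chunks_eq_mk (a b : α) (k n : ℕ) :
    ((List.range n).map fun j : ℕ ↦ of b ^ (-(j : ℤ)) * of a ^ k).prod =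
      mk ((List.range (chunkStart k n)).map (prefixLetter a b k)) := by
  induction n with
  | zero => simp [chunkStart_zero, ← one_eq_mk]
  | succ n ih =>
    rw [List.range_succ, List.map_append, List.prod_append, ih, chunkStart_succ, List.range_add,
      List.range_add]
    simp only [List.map_append, List.map_map, List.map_singleton, List.prod_singleton,
      of_zpow_neg_eq_mk, of_pow_eq_mk, mul_mk, List.append_assoc]
    congr 3
    · exact (map_range_eq_replicate fun t ht ↦ prefixLetter_chunkStart_add ht).symm
    · exact (map_range_eq_replicate fun t ht ↦ prefixLetter_chunkStart_add_add ht).symm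

lemma prefix_mul_tail_eq_mk (a b : α) (k n : ℕ) :
    mk ((List.range (chunkStart k n)).map (prefixLetter a b k)) * of b ^ n.choose 2 =
      mk (word a b k n) := by
  rw [of_pow_eq_mk, mul_mk, word, List.range_add, List.map_append, List.map_map]
  congr 2
  · exact List.map_congr_left fun i hi ↦ (letter_of_lt (List.mem_range.1 hi)).symm
  · exact (map_range_eq_replicate fun t _ ↦ if_neg (by simp)).symm

-- Spelled exactly as in `nonnegligible_words`, so that membership in its set is `rfl`.
def wordY (a b : α) (k n : ℕ) : FreeGroup α :=
  (FreeGroup.of a) ^ k *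
    ((List.range (n - 1)).map (fun j =>
      (FreeGroup.of b) ^ (-((j : ℤ) + 1)) * (FreeGroup.of a) ^ k)).prod *
    (FreeGroup.of b) ^ (n * (n - 1) / 2)

lemma wordY_eq_mk (hn : 1 ≤ n) : wordY a b k n = mk (word a b k n) := by
  obtain ⟨n, rfl⟩ : ∃ n', n = n' + 1 := ⟨n - 1, by omega⟩
  rw [← prefix_mul_tail_eq_mk, ← prod_chunks_eq_mk, Nat.choose_two_right, List.range_succ_eq_map]
  simp only [wordY, Nat.add_sub_cancel, List.map_cons, List.prod_cons, List.map_map]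
  congr 2
  · simp
  · simp only [List.pure_def, List.bind_eq_flatMap, ← List.map_eq_flatMap, List.map_map,
      Function.comp_def, Nat.succ_eq_add_one, Nat.cast_succ]

theorem toWord_wordY [DecidableEq α] (hab : a ≠ b) (hk : 0 < k) (hn : 1 ≤ n) :
    (wordY a b k n).toWord = word a b k n := by
  rw [wordY_eq_mk hn, toWord_mk, (isReduced_word hab hk).reduce_eq]

lemma eventually_length_word_add_lt (k N : ℕ) :
    ∀ᶠ n in atTop, chunkStart k n + n.choose 2 + 8 * N * (k + 2 * n) < 4 * chunkStart k n := by
  filter_upwards [eventually_ge_atTop (16 * N + 3)] with n hn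
  obtain ⟨m, rfl⟩ : ∃ m, n = m + 1 := ⟨n - 1, by omega⟩
  have hchoose := Nat.add_one_mul_choose_eq m 1
  rw [Nat.choose_one_right] at hchoose
  unfold chunkStart
  nlinarith

end Staircase

/-- In the free group on `m ≥ 4` generators `e₁, e₂, e₃, e₄, …`, and for a fixed
positive integer `k`, the set of the words
`e₁ᵏ (e₄⁻¹ e₁ᵏ)(e₄⁻² e₁ᵏ) ⋯ (e₄^{-(n-1)} e₁ᵏ) e₄^{n(n-1)/2}` (for `n = 1, 2, 3, …`)
is non-negligible. -/
theorem nonnegligible_words (m : ℕ) (hm : 4 ≤ m) (k : ℕ) (hk : 0 < k) :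
    ¬ Negligible {y : FreeGroup (Fin m) | ∃ n : ℕ, 1 ≤ n ∧
      y = (FreeGroup.of (⟨0, by omega⟩ : Fin m)) ^ k *
          ((List.range (n - 1)).map (fun j =>
            (FreeGroup.of (⟨3, by omega⟩ : Fin m)) ^ (-((j : ℤ) + 1)) *
            (FreeGroup.of (⟨0, by omega⟩ : Fin m)) ^ k)).prod *
          (FreeGroup.of (⟨3, by omega⟩ : Fin m)) ^ (n * (n - 1) / 2)} := by
  open Staircase in
  set a : Fin m := ⟨0, by omega⟩
  set b : Fin m := ⟨3, by omega⟩
  have hab : a ≠ b := by simp [a, b]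
  have hword : ∀ᶠ n in atTop, (wordY a b k n).toWord = word a b k n :=
    (eventually_ge_atTop 1).mono fun n hn ↦ toWord_wordY hab hk hn
  refine not_negligible_of_repeatsShortOnPrefix (wordY a b k) (chunkStart k) (fun n ↦ k + 2 * n)
    ?_ ?_ fun N ↦ ?_
  · refine tendsto_atTop_mono' _ ?_ tendsto_id
    filter_upwards [hword] with n hn
    rw [hn, length_word, chunkStart]
    exact (Nat.le_mul_of_pos_right n hk).trans (by omega)
  · filter_upwards [hword, eventually_ge_atTop 1] with n hn hn1
    exact ⟨⟨n, hn1, rfl⟩, by rw [hn, length_word]; omega,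
      repeatsShortOnPrefix_of_toWord_eq hab hk hn⟩
  · filter_upwards [hword, eventually_length_word_add_lt k N] with n hn h
    rwa [hn, length_word]
end
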